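/- Let V be a finite-dimensional Γ-graded vector space with commutation factor ε. The bilinear form on gl_ε(V) given by (f,g) ↦ Tr_ε(fg), where Tr_ε(f) := Tr(𝓔∘f) and 𝓔(v) = ε(v,v)v, is ad-invariant, ε-symmetric and non-degenerate. -/
import Mathlib



/-- A commutation factor of an abelian group `Γ` with values in `k`. -/
structure CommutationFactor (k Γ : Type*) [Field k] [AddCommGroup Γ] where
  ε : Γ → Γ → k
  mul_symm : ∀ a b, ε a b * ε b a = 1
  add_fst : ∀ a b c, ε (a + b) c = ε a c * ε b c
  add_snd : ∀ a b c, ε a (b + c) = ε a b * ε a c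

/-- The submodule of endomorphisms of a `Γ`-graded vector space which are
homogeneous of degree `γ`. -/
def homDeg {k Γ V : Type*} [Field k] [AddCommGroup Γ]
    [AddCommGroup V] [Module k V]
    (𝒱 : Γ → Submodule k V) (γ : Γ) : Submodule k (Module.End k V) where
  carrier := {f | ∀ a : Γ, ∀ v ∈ 𝒱 a, f v ∈ 𝒱 (a + γ)}
  add_mem' := by
    intro f g hf hg a v hv
    simpa [LinearMap.add_apply] using Submodule.add_mem _ (hf a v hv) (hg a v hv)
  zero_mem' := by
    intro a v hv
    simp
  smul_mem' := by
    intro c f hf a v hv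
    simpa [LinearMap.smul_apply] using Submodule.smul_mem _ c (hf a v hv)

/-- The submodule of endomorphisms of degree `γ` which are ε-skew with respect
to a bilinear form `Bv`. -/
def skewDeg {k Γ V : Type*} [Field k] [AddCommGroup Γ]
    [AddCommGroup V] [Module k V]
    (ε : Γ → Γ → k) (Bv : V →ₗ[k] V →ₗ[k] k)
    (𝒱 : Γ → Submodule k V) (γ : Γ) : Submodule k (Module.End k V) where
  carrier := {f | ∀ a b : Γ, ∀ v ∈ 𝒱 a, ∀ w ∈ 𝒱 b,
    Bv (f v) w + ε γ a * Bv v (f w) = 0}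
  add_mem' := by
    intro f g hf hg a b v hv w hw
    have h1 := hf a b v hv w hw
    have h2 := hg a b v hv w hw
    simp only [LinearMap.add_apply, map_add]
    linear_combination h1 + h2
  zero_mem' := by
    intro a b v hv w hw
    simp
  smul_mem' := by
    intro c f hf a b v hv w hw
    have h1 := hf a b v hv w hw
    simp only [LinearMap.smul_apply, map_smul, smul_eq_mul]
    linear_combination c * h1

/-- The colour Lie algebra `so_ε(V, Bv)` as a submodule of `End(V)`: the span
of its homogeneous components. -/
def soSub {k Γ V : Type*} [Field k] [AddCommGroup Γ]
    [AddCommGroup V] [Module k V]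
    (ε : Γ → Γ → k) (Bv : V →ₗ[k] V →ₗ[k] k)
    (𝒱 : Γ → Submodule k V) : Submodule k (Module.End k V) :=
  ⨆ γ : Γ, (homDeg 𝒱 γ ⊓ skewDeg ε Bv 𝒱 γ)

section Aux

open LinearMap

variable {k Γ V : Type*} [Field k] [AddCommGroup Γ] [DecidableEq Γ]
    [AddCommGroup V] [Module k V]
    (𝒱 : Γ → Submodule k V) [DirectSum.Decomposition 𝒱]

/-- Projection onto the degree `γ` component, as an endomorphism of `V`. -/
noncomputable def projDeg (γ : Γ) : Module.End k V :=
  (𝒱 γ).subtype ∘ₗ (DirectSum.component k Γ (fun i => 𝒱 i) γ) ∘ₗ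
    (DirectSum.decomposeLinearEquiv 𝒱).toLinearMap

lemma projDeg_apply (γ : Γ) (v : V) :
    projDeg 𝒱 γ v = (DirectSum.decompose 𝒱 v γ : V) := rfl

lemma projDeg_mem (γ : Γ) (v : V) : projDeg 𝒱 γ v ∈ 𝒱 γ :=
  (DirectSum.decompose 𝒱 v γ).2

lemma projDeg_of_mem_same {γ : Γ} {v : V} (hv : v ∈ 𝒱 γ) : projDeg 𝒱 γ v = v := by
  rw [projDeg_apply, DirectSum.decompose_of_mem_same 𝒱 hv]

lemma projDeg_of_mem_ne {γ c : Γ} {v : V} (hv : v ∈ 𝒱 c) (h : c ≠ γ) :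
    projDeg 𝒱 γ v = 0 := by
  rw [projDeg_apply, DirectSum.decompose_of_mem_ne 𝒱 hv h]

lemma end_ext {f g : Module.End k V} (h : ∀ γ, ∀ v ∈ 𝒱 γ, f v = g v) : f = g := by
  classical
  ext v
  rw [← DirectSum.sum_support_decompose 𝒱 v, map_sum, map_sum]
  exact Finset.sum_congr rfl fun γ _ => h γ _ (DirectSum.decompose 𝒱 v γ).2

lemma trace_homDeg_eq_zero [FiniteDimensional k V] {δ : Γ} (hδ : δ ≠ 0)
    {f : Module.End k V} (hf : f ∈ homDeg 𝒱 δ) :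
    LinearMap.trace k V f = 0 := by
  classical
  set b := Module.finBasis k V with hb
  set S : Finset Γ := Finset.univ.biUnion (fun i => (DirectSum.decompose 𝒱 (b i)).support)
    with hS
  have hid : (∑ γ ∈ S, projDeg 𝒱 γ) = (1 : Module.End k V) := by
    apply b.ext
    intro i
    have hsub : (DirectSum.decompose 𝒱 (b i)).support ⊆ S :=
      Finset.subset_biUnion_of_mem (fun j => (DirectSum.decompose 𝒱 (b j)).support)
        (Finset.mem_univ i)
    rw [LinearMap.sum_apply, Module.End.one_apply]
    calc ∑ γ ∈ S, projDeg 𝒱 γ (b i)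
        = ∑ γ ∈ S, ((DirectSum.decompose 𝒱 (b i)) γ : V) :=
          Finset.sum_congr rfl fun γ _ => projDeg_apply 𝒱 γ (b i)
      _ = ∑ γ ∈ (DirectSum.decompose 𝒱 (b i)).support,
            ((DirectSum.decompose 𝒱 (b i)) γ : V) :=
          (Finset.sum_subset hsub (fun γ _ hγ => by
            rw [DFinsupp.notMem_support_iff.mp hγ, ZeroMemClass.coe_zero])).symm
      _ = b i := DirectSum.sum_support_decompose 𝒱 (b i)
  have h0 : ∀ γ : Γ, LinearMap.trace k V (f * projDeg 𝒱 γ) = 0 := by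
    intro γ
    have hproj : projDeg 𝒱 γ * projDeg 𝒱 γ = projDeg 𝒱 γ := by
      apply end_ext 𝒱; intro c v hv
      by_cases hc : c = γ
      · subst hc
        simp [Module.End.mul_apply, projDeg_of_mem_same 𝒱 hv]
      · simp [Module.End.mul_apply, projDeg_of_mem_ne 𝒱 hv hc]
    have hz : projDeg 𝒱 γ * (f * projDeg 𝒱 γ) = 0 := by
      apply end_ext 𝒱; intro c v hv
      have h1 : projDeg 𝒱 γ v ∈ 𝒱 γ := projDeg_mem 𝒱 γ v
      have h2 : f (projDeg 𝒱 γ v) ∈ 𝒱 (γ + δ) := hf γ _ h1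
      have hne : γ + δ ≠ γ := fun h => hδ (by
        have := h
        rwa [add_eq_left] at this)
      simp [Module.End.mul_apply, projDeg_of_mem_ne 𝒱 h2 hne]
    calc LinearMap.trace k V (f * projDeg 𝒱 γ)
        = LinearMap.trace k V (f * (projDeg 𝒱 γ * projDeg 𝒱 γ)) := by rw [hproj]
      _ = LinearMap.trace k V ((f * projDeg 𝒱 γ) * projDeg 𝒱 γ) := by rw [mul_assoc]
      _ = LinearMap.trace k V (projDeg 𝒱 γ * (f * projDeg 𝒱 γ)) :=
          LinearMap.trace_mul_comm k _ _
      _ = 0 := by rw [hz, map_zero]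
  calc LinearMap.trace k V f
      = LinearMap.trace k V (f * ∑ γ ∈ S, projDeg 𝒱 γ) := by rw [hid, mul_one]
    _ = ∑ γ ∈ S, LinearMap.trace k V (f * projDeg 𝒱 γ) := by rw [Finset.mul_sum, map_sum]
    _ = 0 := Finset.sum_eq_zero fun γ _ => h0 γ

lemma homDeg_mul {a b : Γ} {f g : Module.End k V}
    (hf : f ∈ homDeg 𝒱 a) (hg : g ∈ homDeg 𝒱 b) : f * g ∈ homDeg 𝒱 (b + a) := by
  intro c v hv
  have := hf (c + b) _ (hg c v hv)
  rwa [add_assoc] at this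

lemma trace_nondeg [FiniteDimensional k V]
    (A : Module.End k V) (h : ∀ g : Module.End k V, LinearMap.trace k V (A * g) = 0) :
    A = 0 := by
  ext w
  rw [LinearMap.zero_apply, ← Module.forall_dual_apply_eq_zero_iff k (A w)]
  intro φ
  have hcomp : A * (dualTensorHom k V V (φ ⊗ₜ[k] w))
      = dualTensorHom k V V (φ ⊗ₜ[k] (A w)) := by
    ext v
    simp [Module.End.mul_apply, dualTensorHom_apply, map_smul]
  have h2 := h (dualTensorHom k V V (φ ⊗ₜ[k] w))
  rwa [hcomp, LinearMap.trace_eq_contract_apply, contractLeft_apply] at h2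

end Aux

section CF

variable {k Γ : Type*} [Field k] [AddCommGroup Γ] (E : CommutationFactor k Γ)

lemma CommutationFactor.eps_zero_fst (b : Γ) : E.ε 0 b = 1 := by
  have h1 := E.add_fst 0 0 b
  rw [add_zero] at h1
  have hne : E.ε 0 b ≠ 0 := left_ne_zero_of_mul_eq_one (E.mul_symm 0 b)
  exact mul_left_cancel₀ hne (by rw [mul_one]; exact h1.symm)

end CF

section Symm

open LinearMap

variable {k Γ V : Type*} [Field k] [AddCommGroup Γ] [DecidableEq Γ]
    [AddCommGroup V] [Module k V] [FiniteDimensional k V]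
    (E : CommutationFactor k Γ)
    (𝒱 : Γ → Submodule k V) [DirectSum.Decomposition 𝒱]
    (calE : Module.End k V)
    (hcalE : ∀ γ : Γ, ∀ v ∈ 𝒱 γ, calE v = E.ε γ γ • v)

include hcalE in
lemma calE_mul_mem {δ : Γ} {A : Module.End k V} (hA : A ∈ homDeg 𝒱 δ) :
    calE * A ∈ homDeg 𝒱 δ := by
  intro c v hv
  have h1 : A v ∈ 𝒱 (c + δ) := hA c v hv
  show calE (A v) ∈ 𝒱 (c + δ)
  rw [hcalE _ _ h1]
  exact Submodule.smul_mem _ _ h1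

include hcalE in
lemma trace_eps_symm {a b : Γ} {f g : Module.End k V}
    (hf : f ∈ homDeg 𝒱 a) (hg : g ∈ homDeg 𝒱 b) :
    LinearMap.trace k V (calE * (f * g))
      = E.ε a b * LinearMap.trace k V (calE * (g * f)) := by
  by_cases hab : a + b = 0
  · -- the diagonal case
    have e5 := E.mul_symm b b
    have hcomm : g * calE = E.ε b b • (calE * g) := by
      apply end_ext 𝒱
      intro c v hv
      have h1 : g v ∈ 𝒱 (c + b) := hg c v hv
      simp only [Module.End.mul_apply, LinearMap.smul_apply]
      rw [hcalE c v hv, map_smul, hcalE _ _ h1, smul_smul]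
      congr 1
      have e1 := E.add_snd c c b
      have e2 := E.add_fst c b (c + b)
      have e3 := E.add_snd b c b
      have e4 := E.mul_symm c b
      rw [e2, e1, e3]
      linear_combination (-(E.ε c c)) * e5
        + (-(E.ε c c * E.ε b b * E.ε b b)) * e4
    have hab2 : E.ε a b = E.ε b b := by
      have h1 := E.add_fst a b b
      rw [hab, E.eps_zero_fst b] at h1
      have hne : E.ε b b ≠ 0 := left_ne_zero_of_mul_eq_one e5
      exact mul_right_cancel₀ hne (h1.symm.trans e5.symm)
    calc LinearMap.trace k V (calE * (f * g))
        = LinearMap.trace k V ((calE * f) * g) := by rw [mul_assoc]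
      _ = LinearMap.trace k V (g * (calE * f)) := LinearMap.trace_mul_comm k _ _
      _ = LinearMap.trace k V ((g * calE) * f) := by rw [mul_assoc]
      _ = LinearMap.trace k V ((E.ε b b • (calE * g)) * f) := by rw [hcomm]
      _ = E.ε b b * LinearMap.trace k V (calE * (g * f)) := by
          rw [smul_mul_assoc, map_smul, mul_assoc, smul_eq_mul]
      _ = E.ε a b * LinearMap.trace k V (calE * (g * f)) := by rw [hab2]
  · -- off-diagonal: both traces vanish
    have hba : b + a ≠ 0 := fun h => hab (by rwa [add_comm])
    have t1 : LinearMap.trace k V (calE * (f * g)) = 0 :=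
      trace_homDeg_eq_zero 𝒱 hba (calE_mul_mem E 𝒱 calE hcalE (homDeg_mul 𝒱 hf hg))
    have t2 : LinearMap.trace k V (calE * (g * f)) = 0 :=
      trace_homDeg_eq_zero 𝒱 hab (calE_mul_mem E 𝒱 calE hcalE (homDeg_mul 𝒱 hg hf))
    rw [t1, t2, mul_zero]

end Symm
/-- The bilinear form `(f,g) ↦ Tr_ε(fg)` on `gl_ε(V)` is ad-invariant,
ε-symmetric (on homogeneous elements) and non-degenerate. -/
theorem stmt7 {k Γ V : Type*} [Field k] [AddCommGroup Γ] [DecidableEq Γ]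
    [AddCommGroup V] [Module k V] [FiniteDimensional k V]
    (h2 : (2 : k) ≠ 0)
    (E : CommutationFactor k Γ)
    (𝒱 : Γ → Submodule k V) [DirectSum.Decomposition 𝒱]
    (calE : Module.End k V)
    (hcalE : ∀ γ : Γ, ∀ v ∈ 𝒱 γ, calE v = E.ε γ γ • v) :
    (∀ a b c : Γ, ∀ f ∈ homDeg 𝒱 a, ∀ g ∈ homDeg 𝒱 b, ∀ h ∈ homDeg 𝒱 c,
      LinearMap.trace k V (calE * ((f * g - E.ε a b • (g * f)) * h))
        = -(E.ε a b) *
          LinearMap.trace k V (calE * (g * (f * h - E.ε a c • (h * f))))) ∧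
    (∀ a b : Γ, ∀ f ∈ homDeg 𝒱 a, ∀ g ∈ homDeg 𝒱 b,
      LinearMap.trace k V (calE * (f * g))
        = E.ε a b * LinearMap.trace k V (calE * (g * f))) ∧
    (∀ f : Module.End k V,
      (∀ g : Module.End k V, LinearMap.trace k V (calE * (f * g)) = 0) → f = 0) := by
  refine ⟨?_, fun a b f hf g hg => trace_eps_symm E 𝒱 calE hcalE hf hg, ?_⟩
  · intro a b c f hf g hg h hh
    have hgh : g * h ∈ homDeg 𝒱 (c + b) := homDeg_mul 𝒱 hg hh
    have key := trace_eps_symm E 𝒱 calE hcalE hf hgh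
    rw [E.add_snd a c b] at key
    simp only [mul_assoc] at key
    simp only [mul_sub, sub_mul, smul_mul_assoc, mul_smul_comm, mul_assoc,
      map_sub, map_smul, smul_eq_mul]
    linear_combination key
  · intro f hf
    have hE2 : calE * calE = 1 := by
      apply end_ext 𝒱; intro c v hv
      simp only [Module.End.mul_apply, Module.End.one_apply]
      rw [hcalE c v hv, map_smul, hcalE c v hv, smul_smul, E.mul_symm c c, one_smul]
    have hA : calE * f = 0 := by
      apply trace_nondeg
      intro g
      rw [mul_assoc]
      exact hf g
    calc f = (calE * calE) * f := by rw [hE2, one_mul]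
      _ = calE * (calE * f) := by rw [mul_assoc]
      _ = 0 := by rw [hA, mul_zero]
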